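/- Unique-shortest-path beacon heuristic with tie breaking is admissible: let G be a weighted graph in which for every pair (s,t) the second-shortest path is longer than the shortest by more than 3. Fix a beacon b and define h₀(s,t) = |dist(b,s) − dist(b,t)|. Then for all s ≠ t, either h₀(s,t) = dist(s,t) or h₀(s,t) ≤ dist(s,t) − 3; consequently the heuristic h(s,t) defined as dist(s,t) when h₀(s,t) = dist(s,t) and h₀(s,t)+2 otherwise satisfies h(s,t) ≤ dist(s,t). -/

import Mathlib

/-- Cost of a walk given as a list of vertices: sum of edge weights of consecutive pairs. -/
def walkCost {V : Type*} (w : V → V → ℝ) : List V → ℝ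
  | [] => 0
  | [_] => 0
  | a :: b :: rest => w a b + walkCost w (b :: rest)

/-- `IsWalk E s t l` : `l` is a walk from `s` to `t` using edges of `E`. -/
def IsWalk {V : Type*} (E : V → V → Prop) (s t : V) : List V → Prop
  | [] => False
  | [a] => a = s ∧ a = t
  | a :: b :: rest => a = s ∧ E a b ∧ IsWalk E b t (b :: rest)

/-- Shortest-path distance: infimum of costs of walks from `s` to `t`. -/
noncomputable def gDist {V : Type*} (E : V → V → Prop) (w : V → V → ℝ) (s t : V) : ℝ :=
  sInf (walkCost w '' {l | IsWalk E s t l})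

/-!
The margin assumption makes every distance attained by a walk (an infimum not attained would
be exceeded by `3` by every walk). Hence for any vertices `u, v, x` the concatenation of shortest
`u`–`v` and `v`–`x` walks is a `u`–`x` walk, so `d(u,v) + d(v,x)` either equals `d(u,x)` or
exceeds it by more than `3`. Taking `u = b` and `{v, x} = {s, t}` in the order with
`d(b,v) ≤ d(b,x)` gives the dichotomy for `|d(b,s) − d(b,t)|`, and the tie-broken heuristic is
then at most `d(s,t) − 3 + 2`.
-/

section Walks

variable {V : Type*} {E : V → V → Prop} {w : V → V → ℝ} {δ : ℝ}

def HasShortestPathMargin (E : V → V → Prop) (w : V → V → ℝ) (δ : ℝ) : Prop :=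
  ∀ (s t : V) (l : List V), IsWalk E s t l →
    walkCost w l ≠ gDist E w s t → gDist E w s t + δ < walkCost w l

namespace IsWalk

theorem exists_eq_cons {s t : V} {l : List V} (h : IsWalk E s t l) : ∃ l', l = s :: l' := by
  match l, h with
  | [_], h => exact ⟨[], by rw [h.1]⟩
  | _ :: _ :: r, h => exact ⟨_ :: r, by rw [h.1]⟩

theorem append {s t u : V} {l m : List V} (hl : IsWalk E s t l) (hm : IsWalk E t u m) :
    ∃ p, IsWalk E s u p ∧ walkCost w p = walkCost w l + walkCost w m := by
  induction l generalizing s with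
  | nil => exact hl.elim
  | cons a rest ih =>
    cases rest with
    | nil =>
      obtain ⟨rfl, rfl⟩ := hl
      exact ⟨m, hm, by simp [walkCost]⟩
    | cons c r =>
      obtain ⟨rfl, hac, hrest⟩ := hl
      obtain ⟨p, hp, hcost⟩ := ih hrest
      obtain ⟨p', rfl⟩ := hp.exists_eq_cons
      exact ⟨a :: c :: p', ⟨rfl, hac, hp⟩, by simp only [walkCost] at hcost ⊢; linarith⟩

theorem reverse (hEsymm : ∀ u v, E u v → E v u) (hwsymm : ∀ u v, w u v = w v u)
    {s t : V} {l : List V} (hl : IsWalk E s t l) :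
    ∃ m, IsWalk E t s m ∧ walkCost w m = walkCost w l := by
  induction l generalizing s with
  | nil => exact hl.elim
  | cons a rest ih =>
    cases rest with
    | nil => exact ⟨[a], ⟨hl.2, hl.1⟩, rfl⟩
    | cons c r =>
      obtain ⟨rfl, hac, hrest⟩ := hl
      obtain ⟨m, hm, hcm⟩ := ih hrest
      have hback : IsWalk E c a [c, a] := ⟨rfl, hEsymm a c hac, rfl, rfl⟩
      obtain ⟨p, hp, hcp⟩ := hm.append (w := w) hback
      refine ⟨p, hp, ?_⟩
      simp only [walkCost] at hcp hcm ⊢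
      rw [hcp, hcm, hwsymm c a]
      ring

end IsWalk

theorem gDist_le_walkCost (hδ : 0 ≤ δ) (hmargin : HasShortestPathMargin E w δ)
    {s t : V} {l : List V} (hl : IsWalk E s t l) : gDist E w s t ≤ walkCost w l := by
  by_cases heq : walkCost w l = gDist E w s t
  · exact heq.ge
  · linarith [hmargin s t l hl heq]

theorem exists_walkCost_eq_gDist (hδ : 0 < δ) (hmargin : HasShortestPathMargin E w δ)
    {s t : V} (hst : ∃ l, IsWalk E s t l) :
    ∃ l, IsWalk E s t l ∧ walkCost w l = gDist E w s t := by
  by_contra! hcon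
  obtain ⟨l₀, hl₀⟩ := hst
  have : gDist E w s t + δ ≤ gDist E w s t :=
    le_csInf ⟨_, l₀, hl₀, rfl⟩ fun _ ⟨l, hl, hcost⟩ =>
      hcost ▸ (hmargin s t l hl (hcon l hl)).le
  linarith

theorem gDist_comm (hδ : 0 < δ) (hmargin : HasShortestPathMargin E w δ)
    (hconn : ∀ s t : V, ∃ l, IsWalk E s t l)
    (hEsymm : ∀ u v, E u v → E v u) (hwsymm : ∀ u v, w u v = w v u) (s t : V) :
    gDist E w s t = gDist E w t s := by
  have hle : ∀ s t : V, gDist E w t s ≤ gDist E w s t := fun s t => by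
    obtain ⟨l, hl, hcost⟩ := exists_walkCost_eq_gDist hδ hmargin (hconn s t)
    obtain ⟨m, hm, hcm⟩ := hl.reverse hEsymm hwsymm
    exact hcost ▸ hcm ▸ gDist_le_walkCost hδ.le hmargin hm
  exact le_antisymm (hle t s) (hle s t)

theorem gDist_add_gDist_eq_or_lt (hδ : 0 < δ) (hmargin : HasShortestPathMargin E w δ)
    {u v x : V} (huv : ∃ l, IsWalk E u v l) (hvx : ∃ l, IsWalk E v x l) :
    gDist E w u v + gDist E w v x = gDist E w u x ∨
      gDist E w u x + δ < gDist E w u v + gDist E w v x := by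
  obtain ⟨l, hl, hl_cost⟩ := exists_walkCost_eq_gDist hδ hmargin huv
  obtain ⟨m, hm, hm_cost⟩ := exists_walkCost_eq_gDist hδ hmargin hvx
  obtain ⟨p, hp, hp_cost⟩ := hl.append (w := w) hm
  rw [← hl_cost, ← hm_cost, ← hp_cost]
  exact (em _).imp_right (hmargin u x p hp)

theorem abs_sub_gDist_eq_or_lt (hδ : 0 < δ) (hmargin : HasShortestPathMargin E w δ)
    (hconn : ∀ s t : V, ∃ l, IsWalk E s t l)
    (hEsymm : ∀ u v, E u v → E v u) (hwsymm : ∀ u v, w u v = w v u) (b s t : V) :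
    |gDist E w b s - gDist E w b t| = gDist E w s t ∨
      |gDist E w b s - gDist E w b t| < gDist E w s t - δ := by
  rcases le_total (gDist E w b t) (gDist E w b s) with hts | hst
  · rw [abs_of_nonneg (sub_nonneg.2 hts), gDist_comm hδ hmargin hconn hEsymm hwsymm s t]
    rcases gDist_add_gDist_eq_or_lt hδ hmargin (hconn b t) (hconn t s) with h | h
    exacts [.inl (by linarith), .inr (by linarith)]
  · rw [abs_of_nonpos (sub_nonpos.2 hst)]
    rcases gDist_add_gDist_eq_or_lt hδ hmargin (hconn b s) (hconn s t) with h | h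
    exacts [.inl (by linarith), .inr (by linarith)]

end Walks

open scoped Classical in
theorem beacon_tie_breaking_admissible_general {V : Type*} (E : V → V → Prop) (w : V → V → ℝ)
    (hEsymm : ∀ u v, E u v → E v u)
    (hwsymm : ∀ u v, w u v = w v u)
    (hconn : ∀ s t : V, ∃ l, IsWalk E s t l)
    -- margin assumption: any walk that is not a shortest path is longer by more than 3
    (hmargin : ∀ (s t : V) (l : List V), IsWalk E s t l →
      walkCost w l ≠ gDist E w s t → gDist E w s t + 3 < walkCost w l)
    (b : V) :
    ∀ s t : V, s ≠ t →
      (|gDist E w b s - gDist E w b t| = gDist E w s t ∨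
        |gDist E w b s - gDist E w b t| ≤ gDist E w s t - 3) ∧
      (if |gDist E w b s - gDist E w b t| = gDist E w s t then gDist E w s t
        else |gDist E w b s - gDist E w b t| + 2) ≤ gDist E w s t := by
  intro s t _
  have hdich := abs_sub_gDist_eq_or_lt three_pos hmargin hconn hEsymm hwsymm b s t
  refine ⟨hdich.imp_right le_of_lt, ?_⟩
  split_ifs with hexact
  · exact le_rfl
  · linarith [hdich.resolve_left hexact]

open scoped Classical in
/-- Unique-shortest-path beacon heuristic with tie breaking is admissible: with margin `> 3`
between the shortest and any non-shortest walk, the beacon heuristic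
`h₀(s,t) = |dist(b,s) − dist(b,t)|` is either exact or at least `3` below `dist(s,t)`, and the
tie-broken heuristic (adding `2` in the non-exact case) is admissible. -/
theorem beacon_tie_breaking_admissible {V : Type*} (E : V → V → Prop) (w : V → V → ℝ)
    (hwnonneg : ∀ u v, E u v → 0 ≤ w u v)
    (hEsymm : ∀ u v, E u v → E v u)
    (hwsymm : ∀ u v, w u v = w v u)
    (hconn : ∀ s t : V, ∃ l, IsWalk E s t l)
    -- margin assumption: any walk that is not a shortest path is longer by more than 3
    (hmargin : ∀ (s t : V) (l : List V), IsWalk E s t l →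
      walkCost w l ≠ gDist E w s t → gDist E w s t + 3 < walkCost w l)
    (b : V) :
    ∀ s t : V, s ≠ t →
      (|gDist E w b s - gDist E w b t| = gDist E w s t ∨
        |gDist E w b s - gDist E w b t| ≤ gDist E w s t - 3) ∧
      (if |gDist E w b s - gDist E w b t| = gDist E w s t then gDist E w s t
        else |gDist E w b s - gDist E w b t| + 2) ≤ gDist E w s t :=
  beacon_tie_breaking_admissible_general E w hEsymm hwsymm hconn hmargin b
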